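/- The bracket on SV = SV[Γ,s] makes SV a Lie superalgebra: it satisfies super skew-symmetry, [x,y] = −(−1)^{|x||y|}[y,x] for all homogeneous x, y ∈ SV, and the super Jacobi identity, [x,[y,z]] = [[x,y],z] + (−1)^{|x||y|}[y,[x,z]] for all homogeneous x, y ∈ SV and all z ∈ SV. -/

import Mathlib

/-!
Everything reduces to identities between basis vectors. Let the second index run over `ℤ` and
the first over all of `ℂ`, with the same bracket formulas: nothing is truncated there, so
skew-symmetry and the Jacobi identity on basis vectors are polynomial identities in the indices.
The obvious map from `SV[Γ,s]` into this larger space is injective and preserves brackets,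
because a symbol with second index `-1` only arises in the bracket of two basis vectors with
second index `0`, where its coefficient vanishes. Bilinearity then spreads the identities from
basis vectors of the right parities to all even and odd elements.
-/

noncomputable section

namespace SVSuper

variable (Γ : AddSubgroup ℂ) (s : ℂ)

/-- Basis index type of `SV[Γ,s]`: `Sum.inl (α, i)` stands for `L_{α,i}` (`α ∈ Γ`),
`Sum.inr (μ, j)` stands for `G_{μ,j}` (`μ ∈ s + Γ`). -/
abbrev Idx : Type := (Γ × ℕ) ⊕ ({μ : ℂ // μ - s ∈ Γ} × ℕ)

/-- The underlying vector space of `SV[Γ,s]`: the free `ℂ`-module on `Idx`. -/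
abbrev SV : Type := Idx Γ s →₀ ℂ

/-- The basis vector `L_{α,i}`. -/
def lgen (α : ℂ) (hα : α ∈ Γ) (i : ℕ) : SV Γ s :=
  Finsupp.single (Sum.inl (⟨α, hα⟩, i)) 1

/-- The basis vector `G_{μ,j}`. -/
def ggen (μ : ℂ) (hμ : μ - s ∈ Γ) (j : ℕ) : SV Γ s :=
  Finsupp.single (Sum.inr (⟨μ, hμ⟩, j)) 1

theorem memLG {α μ : ℂ} (hα : α ∈ Γ) (hμ : μ - s ∈ Γ) : α + μ - s ∈ Γ := by
  have h : α + μ - s = α + (μ - s) := by ring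
  rw [h]; exact add_mem hα hμ

theorem memGG (hs : 2 * s ∈ Γ) {μ ν : ℂ} (hμ : μ - s ∈ Γ) (hν : ν - s ∈ Γ) :
    μ + ν ∈ Γ := by
  have h : μ + ν = (μ - s) + (ν - s) + 2 * s := by ring
  rw [h]; exact add_mem (add_mem hμ hν) hs

/-- The bracket on basis vectors (any symbol with second index `-1` is interpreted as `0`;
here this is automatic since the corresponding coefficient vanishes when `i = j = 0`). -/
def bk (hs : 2 * s ∈ Γ) : Idx Γ s → Idx Γ s → SV Γ s
  | Sum.inl (⟨α, hα⟩, i), Sum.inl (⟨β, hβ⟩, j) =>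
      (β - α) • lgen Γ s (α + β) (add_mem hα hβ) (i + j)
        + ((j : ℂ) - (i : ℂ)) • lgen Γ s (α + β) (add_mem hα hβ) (i + j - 1)
  | Sum.inl (⟨α, hα⟩, i), Sum.inr (⟨μ, hμ⟩, j) =>
      (μ - α / 2) • ggen Γ s (α + μ) (memLG Γ s hα hμ) (i + j)
        + ((j : ℂ) - (i : ℂ) / 2) • ggen Γ s (α + μ) (memLG Γ s hα hμ) (i + j - 1)
  | Sum.inr (⟨μ, hμ⟩, i), Sum.inl (⟨α, hα⟩, j) =>
      -((μ - α / 2) • ggen Γ s (α + μ) (memLG Γ s hα hμ) (j + i)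
        + ((i : ℂ) - (j : ℂ) / 2) • ggen Γ s (α + μ) (memLG Γ s hα hμ) (j + i - 1))
  | Sum.inr (⟨μ, hμ⟩, i), Sum.inr (⟨ν, hν⟩, j) =>
      (2 : ℂ) • lgen Γ s (μ + ν) (memGG Γ s hs hμ hν) (i + j)

/-- The bilinear bracket of `SV[Γ,s]`. -/
def bkt (hs : 2 * s ∈ Γ) (x y : SV Γ s) : SV Γ s :=
  x.sum fun a ca => y.sum fun b cb => (ca * cb) • bk Γ s hs a b

/-- `x` lies in the even part `SV_0̄` (the span of the `L_{α,i}`). -/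
def IsEvenElt (x : SV Γ s) : Prop := ∀ b, x (Sum.inr b) = 0

/-- `x` lies in the odd part `SV_1̄` (the span of the `G_{μ,j}`). -/
def IsOddElt (x : SV Γ s) : Prop := ∀ a, x (Sum.inl a) = 0

/-- `x` is `ℤ₂`-homogeneous. -/
def IsHomog (x : SV Γ s) : Prop := IsEvenElt Γ s x ∨ IsOddElt Γ s x

/-- `x` lies in the degree-`γ` component `SV_γ = span{L_{γ,i}, G_{γ,i}}` of the `Ω`-grading. -/
def InDeg (γ : ℂ) (x : SV Γ s) : Prop :=
  (∀ p : Γ × ℕ, (p.1 : ℂ) ≠ γ → x (Sum.inl p) = 0) ∧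
  (∀ q : {μ : ℂ // μ - s ∈ Γ} × ℕ, (q.1 : ℂ) ≠ γ → x (Sum.inr q) = 0)

/-- The group `Ω`, generated by `Γ ∪ {s}`. -/
def Omega : AddSubgroup ℂ := Γ ⊔ AddSubgroup.closure {s}

theorem gamma_mem_Omega {α : ℂ} (hα : α ∈ Γ) : α ∈ Omega Γ s :=
  AddSubgroup.mem_sup_left hα

theorem s_mem_Omega : s ∈ Omega Γ s :=
  AddSubgroup.mem_sup_right (AddSubgroup.subset_closure (Set.mem_singleton s))

theorem smu_mem_Omega {μ : ℂ} (hμ : μ - s ∈ Γ) : μ ∈ Omega Γ s := by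
  have h := add_mem (gamma_mem_Omega Γ s hμ) (s_mem_Omega Γ s)
  rwa [sub_add_cancel] at h

/-- The `Ω`-degree of a basis index. -/
def idxDeg : Idx Γ s → ℂ
  | Sum.inl p => (p.1 : ℂ)
  | Sum.inr q => (q.1 : ℂ)

theorem idxDeg_mem (a : Idx Γ s) : idxDeg Γ s a ∈ Omega Γ s := by
  cases a with
  | inl p => exact gamma_mem_Omega Γ s p.1.2
  | inr q => exact smu_mem_Omega Γ s q.1.2

/-- The derivation `D_φ` attached to a group homomorphism `φ : (Ω,+) → (ℂ,+)`:
`D_φ (L_{α,i}) = φ(α) • L_{α,i}` and `D_φ (G_{μ,j}) = φ(μ) • G_{μ,j}`. -/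
def Dphi (φ : ↥(Omega Γ s) →+ ℂ) : SV Γ s →ₗ[ℂ] SV Γ s :=
  Finsupp.lsum ℂ fun a => φ ⟨idxDeg Γ s a, idxDeg_mem Γ s a⟩ • Finsupp.lsingle a

/-- `D` is a parity-`0` (even) derivation of `SV[Γ,s]`. -/
def IsEvenDer (hs : 2 * s ∈ Γ) (D : SV Γ s →ₗ[ℂ] SV Γ s) : Prop :=
  (∀ x, IsEvenElt Γ s x → IsEvenElt Γ s (D x)) ∧
  (∀ x, IsOddElt Γ s x → IsOddElt Γ s (D x)) ∧
  (∀ x y, IsHomog Γ s x →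
    D (bkt Γ s hs x y) = bkt Γ s hs (D x) y + bkt Γ s hs x (D y))

/-- `D` is a parity-`1` (odd) derivation of `SV[Γ,s]`. -/
def IsOddDer (hs : 2 * s ∈ Γ) (D : SV Γ s →ₗ[ℂ] SV Γ s) : Prop :=
  (∀ x, IsEvenElt Γ s x → IsOddElt Γ s (D x)) ∧
  (∀ x, IsOddElt Γ s x → IsEvenElt Γ s (D x)) ∧
  (∀ x y, IsEvenElt Γ s x →
    D (bkt Γ s hs x y) = bkt Γ s hs (D x) y + bkt Γ s hs x (D y)) ∧
  (∀ x y, IsOddElt Γ s x →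
    D (bkt Γ s hs x y) = bkt Γ s hs (D x) y - bkt Γ s hs x (D y))

/-- `D` is a derivation of `SV[Γ,s]`: a sum of an even and an odd derivation. -/
def IsDer (hs : 2 * s ∈ Γ) (D : SV Γ s →ₗ[ℂ] SV Γ s) : Prop :=
  ∃ D0 D1, IsEvenDer Γ s hs D0 ∧ IsOddDer Γ s hs D1 ∧ D = D0 + D1

/-- `D` has degree `γ`: it maps `SV_δ` into `SV_{δ+γ}` for every `δ`. -/
def HasDeg (γ : ℂ) (D : SV Γ s →ₗ[ℂ] SV Γ s) : Prop :=
  ∀ (δ : ℂ) (x : SV Γ s), InDeg Γ s δ x → InDeg Γ s (δ + γ) (D x)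

/-- `ψ` is a 2-cocycle on `SV[Γ,s]` (super skew-symmetry and super Jacobi identity,
with the sign `(-1)^{|x||y|}` spelled out according to the parities). -/
def IsCocycle (hs : 2 * s ∈ Γ) (ψ : SV Γ s →ₗ[ℂ] SV Γ s →ₗ[ℂ] ℂ) : Prop :=
  (∀ x y, IsHomog Γ s x → IsHomog Γ s y → (IsEvenElt Γ s x ∨ IsEvenElt Γ s y) →
    ψ x y = - ψ y x) ∧
  (∀ x y, IsOddElt Γ s x → IsOddElt Γ s y → ψ x y = ψ y x) ∧
  (∀ x y z, IsHomog Γ s x → IsHomog Γ s y → (IsEvenElt Γ s x ∨ IsEvenElt Γ s y) →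
    ψ x (bkt Γ s hs y z) = ψ (bkt Γ s hs x y) z + ψ y (bkt Γ s hs x z)) ∧
  (∀ x y z, IsOddElt Γ s x → IsOddElt Γ s y →
    ψ x (bkt Γ s hs y z) = ψ (bkt Γ s hs x y) z - ψ y (bkt Γ s hs x z))

/-- `f : SV → ℂ` satisfies the recursive formulas associated to the 2-cocycle `ψ`. -/
def IsAssocMap (hs : 2 * s ∈ Γ) (ψ : SV Γ s →ₗ[ℂ] SV Γ s →ₗ[ℂ] ℂ)
    (f : SV Γ s →ₗ[ℂ] ℂ) : Prop :=
  (∀ i : ℕ, f (lgen Γ s 0 (zero_mem Γ) i)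
      = ψ (lgen Γ s 0 (zero_mem Γ) 0) (lgen Γ s 0 (zero_mem Γ) (i + 1)) / (i + 1)) ∧
  (∀ (α : ℂ) (hα : α ∈ Γ) (i : ℕ), α ≠ 0 →
    f (lgen Γ s α hα i)
      = (ψ (lgen Γ s 0 (zero_mem Γ) 0) (lgen Γ s α hα i) - (i : ℂ) * f (lgen Γ s α hα (i - 1))) / α) ∧
  (∀ (h0 : (0 : ℂ) - s ∈ Γ) (i : ℕ),
    f (ggen Γ s 0 h0 i) = (2 / (2 * (i : ℂ) - 1)) * ψ (lgen Γ s 0 (zero_mem Γ) 1) (ggen Γ s 0 h0 i)) ∧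
  (∀ (μ : ℂ) (hμ : μ - s ∈ Γ) (i : ℕ), μ ≠ 0 →
    f (ggen Γ s μ hμ i)
      = (ψ (lgen Γ s 0 (zero_mem Γ) 0) (ggen Γ s μ hμ i) - (i : ℂ) * f (ggen Γ s μ hμ (i - 1))) / μ)

section SuperIdentities

variable {R M N : Type*} [CommSemiring R] [AddCommMonoid M] [Module R M]
  [AddCommMonoid N] [Module R N]

theorem eq_smul_swap_of_mem_span (B : M →ₗ[R] M →ₗ[R] N) (ε : R) {X Y : Set M}
    (h : ∀ x ∈ X, ∀ y ∈ Y, B x y = ε • B y x) {x y : M}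
    (hx : x ∈ Submodule.span R X) (hy : y ∈ Submodule.span R Y) :
    B x y = ε • B y x := by
  have hY : ∀ x ∈ X, B x y = ε • B y x := fun x' hx' =>
    LinearMap.eqOn_span (f := B x') (g := ε • B.flip x') (h x' hx') hy
  exact LinearMap.eqOn_span (f := B.flip y) (g := ε • B y) hY hx

theorem jacobi_of_mem_span (B : M →ₗ[R] M →ₗ[R] M) (ε : R) {X Y Z : Set M}
    (h : ∀ x ∈ X, ∀ y ∈ Y, ∀ z ∈ Z, B x (B y z) = B (B x y) z + ε • B y (B x z))
    {x y z : M} (hx : x ∈ Submodule.span R X) (hy : y ∈ Submodule.span R Y)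
    (hz : z ∈ Submodule.span R Z) :
    B x (B y z) = B (B x y) z + ε • B y (B x z) := by
  have hZ : ∀ x ∈ X, ∀ y ∈ Y, B x (B y z) = B (B x y) z + ε • B y (B x z) :=
    fun x' hx' y' hy' => LinearMap.eqOn_span (f := B x' ∘ₗ B y')
      (g := B (B x' y') + ε • B y' ∘ₗ B x') (h x' hx' y' hy') hz
  have hY : ∀ x ∈ X, B x (B y z) = B (B x y) z + ε • B y (B x z) :=
    fun x' hx' => LinearMap.eqOn_span (f := B x' ∘ₗ B.flip z)
      (g := B.flip z ∘ₗ B x' + ε • B.flip (B x' z)) (hZ x' hx') hy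
  exact LinearMap.eqOn_span (f := B.flip (B y z))
    (g := B.flip z ∘ₗ B.flip y + ε • B y ∘ₗ B.flip z) hY hx

end SuperIdentities

section BilinearExtension

variable {R κ κ' M : Type*} [CommSemiring R] [AddCommMonoid M] [Module R M]

def bilinExtend (f : κ → κ' → M) : (κ →₀ R) →ₗ[R] (κ' →₀ R) →ₗ[R] M :=
  Finsupp.linearCombination R fun a => Finsupp.linearCombination R (f a)

theorem bilinExtend_apply (f : κ → κ' → M) (x : κ →₀ R) (y : κ' →₀ R) :
    bilinExtend f x y = x.sum fun a ca => y.sum fun b cb => (ca * cb) • f a b := by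
  simp only [bilinExtend, Finsupp.linearCombination_apply, Finsupp.sum, LinearMap.sum_apply,
    LinearMap.smul_apply, Finset.smul_sum, smul_smul]

@[simp]
theorem bilinExtend_single_single (f : κ → κ' → M) (a : κ) (b : κ') (t u : R) :
    bilinExtend f (Finsupp.single a t) (Finsupp.single b u) = (t * u) • f a b := by
  simp [bilinExtend, smul_smul]

end BilinearExtension

abbrev IdxZ : Type := (ℂ × ℤ) ⊕ (ℂ × ℤ)

abbrev SVZ : Type := IdxZ →₀ ℂ

def lZ (α : ℂ) (m : ℤ) : SVZ := Finsupp.single (Sum.inl (α, m)) 1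

def gZ (μ : ℂ) (m : ℤ) : SVZ := Finsupp.single (Sum.inr (μ, m)) 1

def bkZ : IdxZ → IdxZ → SVZ
  | Sum.inl (α, m), Sum.inl (β, n) =>
      (β - α) • lZ (α + β) (m + n) + ((n : ℂ) - (m : ℂ)) • lZ (α + β) (m + n - 1)
  | Sum.inl (α, m), Sum.inr (μ, n) =>
      (μ - α / 2) • gZ (α + μ) (m + n) + ((n : ℂ) - (m : ℂ) / 2) • gZ (α + μ) (m + n - 1)
  | Sum.inr (μ, m), Sum.inl (α, n) =>
      -((μ - α / 2) • gZ (α + μ) (n + m) + ((m : ℂ) - (n : ℂ) / 2) • gZ (α + μ) (n + m - 1))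
  | Sum.inr (μ, m), Sum.inr (ν, n) => (2 : ℂ) • lZ (μ + ν) (m + n)

abbrev bracketZ : SVZ →ₗ[ℂ] SVZ →ₗ[ℂ] SVZ := bilinExtend bkZ

theorem bkZ_skew {a b : IdxZ} (h : a.isLeft ∨ b.isLeft) : bkZ a b = -bkZ b a := by
  rcases a with ⟨α, m⟩ | ⟨μ, m⟩ <;> rcases b with ⟨β, n⟩ | ⟨ν, n⟩
  · simp only [bkZ, lZ]; ring_nf; module
  · simp only [bkZ, gZ]; ring_nf; module
  · simp only [bkZ]
  · simp at h

theorem bkZ_comm_of_isRight {a b : IdxZ} (ha : a.isRight) (hb : b.isRight) :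
    bkZ a b = bkZ b a := by
  rcases a with _ | ⟨μ, m⟩ <;> rcases b with _ | ⟨ν, n⟩ <;> simp at ha hb
  simp only [bkZ, add_comm]

theorem bracketZ_jacobi_single {a b : IdxZ} (h : a.isLeft ∨ b.isLeft) (c : IdxZ) :
    let e (i : IdxZ) : SVZ := Finsupp.single i 1
    bracketZ (e a) (bracketZ (e b) (e c))
      = bracketZ (bracketZ (e a) (e b)) (e c) + bracketZ (e b) (bracketZ (e a) (e c)) := by
  rcases a with ⟨α, m⟩ | ⟨μ, m⟩ <;> rcases b with ⟨β, n⟩ | ⟨ν, n⟩ <;> simp at h <;>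
    rcases c with ⟨γ, k⟩ | ⟨ρ, k⟩ <;>
    · simp only [bilinExtend_single_single, bkZ, lZ, gZ, map_add, map_neg, map_smul, smul_add,
        smul_neg, smul_smul, LinearMap.add_apply, LinearMap.neg_apply, LinearMap.smul_apply]
      ring_nf
      module

theorem bracketZ_jacobi_single_of_isRight {a b : IdxZ} (ha : a.isRight) (hb : b.isRight)
    (c : IdxZ) :
    let e (i : IdxZ) : SVZ := Finsupp.single i 1
    bracketZ (e a) (bracketZ (e b) (e c))
      = bracketZ (bracketZ (e a) (e b)) (e c) - bracketZ (e b) (bracketZ (e a) (e c)) := by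
  rcases a with _ | ⟨μ, m⟩ <;> rcases b with _ | ⟨ν, n⟩ <;> simp at ha hb
  rcases c with ⟨γ, k⟩ | ⟨ρ, k⟩ <;>
  · simp only [bilinExtend_single_single, bkZ, lZ, gZ, map_add, map_neg, map_smul, smul_add,
      smul_neg, smul_smul, LinearMap.smul_apply]
    ring_nf
    module

variable {Γ s}

def idxToZ : Idx Γ s → IdxZ :=
  Sum.map (Prod.map Subtype.val Nat.cast) (Prod.map Subtype.val Nat.cast)

@[simp]
theorem isLeft_idxToZ (a : Idx Γ s) : (idxToZ a).isLeft = a.isLeft := by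
  cases a <;> rfl

@[simp]
theorem isRight_idxToZ (a : Idx Γ s) : (idxToZ a).isRight = a.isRight := by
  cases a <;> rfl

theorem idxToZ_injective : Function.Injective (idxToZ (Γ := Γ) (s := s)) :=
  (Subtype.val_injective.prodMap Nat.cast_injective).sumMap
    (Subtype.val_injective.prodMap Nat.cast_injective)

def toSVZ : SV Γ s →ₗ[ℂ] SVZ := Finsupp.lmapDomain ℂ ℂ idxToZ

theorem toSVZ_injective : Function.Injective (toSVZ (Γ := Γ) (s := s)) :=
  Finsupp.mapDomain_injective idxToZ_injective

@[simp]
theorem toSVZ_single (a : Idx Γ s) (t : ℂ) :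
    toSVZ (Finsupp.single a t) = Finsupp.single (idxToZ a) t := by
  simp [toSVZ]

theorem toSVZ_bk (hs : 2 * s ∈ Γ) (a b : Idx Γ s) :
    toSVZ (bk Γ s hs a b) = bkZ (idxToZ a) (idxToZ b) := by
  rcases a with ⟨⟨α, hα⟩, i⟩ | ⟨⟨μ, hμ⟩, i⟩ <;> rcases b with ⟨⟨β, hβ⟩, j⟩ | ⟨⟨ν, hν⟩, j⟩
  all_goals
    simp only [bk, bkZ, idxToZ, lgen, ggen, lZ, gZ, Sum.map_inl, Sum.map_inr, Prod.map,
      map_add, map_neg, map_smul, toSVZ_single, Int.cast_natCast]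
    obtain ⟨rfl, rfl⟩ | ⟨hij, hji⟩ : (i = 0 ∧ j = 0) ∨ (1 ≤ i + j ∧ 1 ≤ j + i) := by omega
    · simp
    · push_cast [hij, hji]
      rfl

abbrev bracket (hs : 2 * s ∈ Γ) : SV Γ s →ₗ[ℂ] SV Γ s →ₗ[ℂ] SV Γ s := bilinExtend (bk Γ s hs)

theorem bracket_apply (hs : 2 * s ∈ Γ) (x y : SV Γ s) : bracket hs x y = bkt Γ s hs x y :=
  bilinExtend_apply _ x y

theorem toSVZ_bracket (hs : 2 * s ∈ Γ) (x y : SV Γ s) :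
    toSVZ (bracket hs x y) = bracketZ (toSVZ x) (toSVZ y) := by
  have : (bracket hs).compr₂ toSVZ = bracketZ.compl₁₂ toSVZ toSVZ := by
    ext a b
    simp [bracket, toSVZ_bk]
  exact LinearMap.congr_fun₂ this x y

theorem bk_skew (hs : 2 * s ∈ Γ) {a b : Idx Γ s} (h : a.isLeft ∨ b.isLeft) :
    bk Γ s hs a b = -bk Γ s hs b a :=
  toSVZ_injective (by
    rw [map_neg, toSVZ_bk, toSVZ_bk]
    exact bkZ_skew (by simpa using h))

theorem bk_comm_of_isRight (hs : 2 * s ∈ Γ) {a b : Idx Γ s} (ha : a.isRight) (hb : b.isRight) :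
    bk Γ s hs a b = bk Γ s hs b a :=
  toSVZ_injective (by
    rw [toSVZ_bk, toSVZ_bk]
    exact bkZ_comm_of_isRight (by simpa using ha) (by simpa using hb))

theorem bracket_jacobi_single (hs : 2 * s ∈ Γ) {a b : Idx Γ s} (h : a.isLeft ∨ b.isLeft)
    (c : Idx Γ s) :
    let e (i : Idx Γ s) : SV Γ s := Finsupp.single i 1
    bracket hs (e a) (bracket hs (e b) (e c))
      = bracket hs (bracket hs (e a) (e b)) (e c) + bracket hs (e b) (bracket hs (e a) (e c)) :=
  toSVZ_injective (by
    simp only [map_add, toSVZ_bracket, toSVZ_single]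
    exact bracketZ_jacobi_single (by simpa using h) _)

theorem bracket_jacobi_single_of_isRight (hs : 2 * s ∈ Γ) {a b : Idx Γ s} (ha : a.isRight)
    (hb : b.isRight) (c : Idx Γ s) :
    let e (i : Idx Γ s) : SV Γ s := Finsupp.single i 1
    bracket hs (e a) (bracket hs (e b) (e c))
      = bracket hs (bracket hs (e a) (e b)) (e c) - bracket hs (e b) (bracket hs (e a) (e c)) :=
  toSVZ_injective (by
    simp only [map_sub, toSVZ_bracket, toSVZ_single]
    exact bracketZ_jacobi_single_of_isRight (by simpa using ha) (by simpa using hb) _)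

theorem isEvenElt_iff_mem_span {x : SV Γ s} :
    IsEvenElt Γ s x ↔ x ∈ Submodule.span ℂ ((Finsupp.single · 1) '' {a | a.isLeft}) := by
  rw [← Finsupp.supported_eq_span_single, Finsupp.mem_supported']
  refine ⟨fun h a ha => ?_, fun h q => h _ (by simp)⟩
  rcases a with p | q
  · simp at ha
  · exact h q

theorem isOddElt_iff_mem_span {x : SV Γ s} :
    IsOddElt Γ s x ↔ x ∈ Submodule.span ℂ ((Finsupp.single · 1) '' {a | a.isRight}) := by
  rw [← Finsupp.supported_eq_span_single, Finsupp.mem_supported']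
  refine ⟨fun h a ha => ?_, fun h p => h _ (by simp)⟩
  rcases a with p | q
  · exact h p
  · simp at ha

theorem mem_span_single_univ (x : SV Γ s) :
    x ∈ Submodule.span ℂ ((Finsupp.single · 1) '' Set.univ) := by
  rw [← Finsupp.supported_eq_span_single, Finsupp.supported_univ]
  exact Submodule.mem_top

theorem exists_mem_span_of_isEvenElt_or {x y : SV Γ s} (h : IsEvenElt Γ s x ∨ IsEvenElt Γ s y) :
    ∃ S T : Set (Idx Γ s), (∀ a ∈ S, ∀ b ∈ T, a.isLeft ∨ b.isLeft) ∧
      x ∈ Submodule.span ℂ ((Finsupp.single · 1) '' S) ∧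
      y ∈ Submodule.span ℂ ((Finsupp.single · 1) '' T) := by
  rcases h with hx | hy
  · exact ⟨_, _, fun a ha _ _ => Or.inl ha, isEvenElt_iff_mem_span.mp hx, mem_span_single_univ y⟩
  · exact ⟨_, _, fun _ _ b hb => Or.inr hb, mem_span_single_univ x, isEvenElt_iff_mem_span.mp hy⟩

theorem bracket_skew_of_isEvenElt (hs : 2 * s ∈ Γ) {x y : SV Γ s}
    (h : IsEvenElt Γ s x ∨ IsEvenElt Γ s y) : bracket hs x y = -bracket hs y x := by
  obtain ⟨S, T, hST, hx, hy⟩ := exists_mem_span_of_isEvenElt_or h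
  rw [← neg_one_smul ℂ (bracket hs y x)]
  refine eq_smul_swap_of_mem_span (bracket hs) (-1) ?_ hx hy
  rintro _ ⟨a, ha, rfl⟩ _ ⟨b, hb, rfl⟩
  simpa using bk_skew hs (hST a ha b hb)

theorem bracket_comm_of_isOddElt (hs : 2 * s ∈ Γ) {x y : SV Γ s} (hx : IsOddElt Γ s x)
    (hy : IsOddElt Γ s y) : bracket hs x y = bracket hs y x := by
  rw [← one_smul ℂ (bracket hs y x)]
  refine eq_smul_swap_of_mem_span (bracket hs) 1 ?_ (isOddElt_iff_mem_span.mp hx)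
    (isOddElt_iff_mem_span.mp hy)
  rintro _ ⟨a, ha, rfl⟩ _ ⟨b, hb, rfl⟩
  simpa using bk_comm_of_isRight hs ha hb

theorem bracket_jacobi_of_isEvenElt (hs : 2 * s ∈ Γ) {x y : SV Γ s}
    (h : IsEvenElt Γ s x ∨ IsEvenElt Γ s y) (z : SV Γ s) :
    bracket hs x (bracket hs y z)
      = bracket hs (bracket hs x y) z + bracket hs y (bracket hs x z) := by
  obtain ⟨S, T, hST, hx, hy⟩ := exists_mem_span_of_isEvenElt_or h
  rw [← one_smul ℂ (bracket hs y (bracket hs x z))]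
  refine jacobi_of_mem_span (bracket hs) 1 ?_ hx hy (mem_span_single_univ z)
  rintro _ ⟨a, ha, rfl⟩ _ ⟨b, hb, rfl⟩ _ ⟨c, -, rfl⟩
  simpa using bracket_jacobi_single hs (hST a ha b hb) c

theorem bracket_jacobi_of_isOddElt (hs : 2 * s ∈ Γ) {x y : SV Γ s} (hx : IsOddElt Γ s x)
    (hy : IsOddElt Γ s y) (z : SV Γ s) :
    bracket hs x (bracket hs y z)
      = bracket hs (bracket hs x y) z - bracket hs y (bracket hs x z) := by
  rw [sub_eq_add_neg, ← neg_one_smul ℂ (bracket hs y (bracket hs x z))]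
  refine jacobi_of_mem_span (bracket hs) (-1) ?_ (isOddElt_iff_mem_span.mp hx)
    (isOddElt_iff_mem_span.mp hy) (mem_span_single_univ z)
  rintro _ ⟨a, ha, rfl⟩ _ ⟨b, hb, rfl⟩ _ ⟨c, -, rfl⟩
  simpa [sub_eq_add_neg] using bracket_jacobi_single_of_isRight hs ha hb c

theorem SV_is_Lie_superalgebra_general (Γ : AddSubgroup ℂ) (s : ℂ) (hs : 2 * s ∈ Γ) :
    (∀ x y : SV Γ s, IsHomog Γ s x → IsHomog Γ s y →
      (IsEvenElt Γ s x ∨ IsEvenElt Γ s y) → bkt Γ s hs x y = - bkt Γ s hs y x) ∧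
    (∀ x y : SV Γ s, IsOddElt Γ s x → IsOddElt Γ s y →
      bkt Γ s hs x y = bkt Γ s hs y x) ∧
    (∀ x y z : SV Γ s, IsHomog Γ s x → IsHomog Γ s y →
      (IsEvenElt Γ s x ∨ IsEvenElt Γ s y) →
      bkt Γ s hs x (bkt Γ s hs y z)
        = bkt Γ s hs (bkt Γ s hs x y) z + bkt Γ s hs y (bkt Γ s hs x z)) ∧
    (∀ x y z : SV Γ s, IsOddElt Γ s x → IsOddElt Γ s y →
      bkt Γ s hs x (bkt Γ s hs y z)
        = bkt Γ s hs (bkt Γ s hs x y) z - bkt Γ s hs y (bkt Γ s hs x z)) := by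
  simp only [← bracket_apply]
  exact ⟨fun _ _ _ _ h => bracket_skew_of_isEvenElt hs h,
    fun _ _ hx hy => bracket_comm_of_isOddElt hs hx hy,
    fun _ _ z _ _ h => bracket_jacobi_of_isEvenElt hs h z,
    fun _ _ z hx hy => bracket_jacobi_of_isOddElt hs hx hy z⟩

/-- The bracket of `SV[Γ,s]` satisfies super skew-symmetry and the super Jacobi
identity (the sign `(-1)^{|x||y|}` is spelled out according to the parities). -/
theorem SV_is_Lie_superalgebra (Γ : AddSubgroup ℂ) (hΓ : ∀ n : ℤ, (n : ℂ) ∈ Γ)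
    (s : ℂ) (hs : 2 * s ∈ Γ) :
    (∀ x y : SV Γ s, IsHomog Γ s x → IsHomog Γ s y →
      (IsEvenElt Γ s x ∨ IsEvenElt Γ s y) → bkt Γ s hs x y = - bkt Γ s hs y x) ∧
    (∀ x y : SV Γ s, IsOddElt Γ s x → IsOddElt Γ s y →
      bkt Γ s hs x y = bkt Γ s hs y x) ∧
    (∀ x y z : SV Γ s, IsHomog Γ s x → IsHomog Γ s y →
      (IsEvenElt Γ s x ∨ IsEvenElt Γ s y) →
      bkt Γ s hs x (bkt Γ s hs y z)
        = bkt Γ s hs (bkt Γ s hs x y) z + bkt Γ s hs y (bkt Γ s hs x z)) ∧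
    (∀ x y z : SV Γ s, IsOddElt Γ s x → IsOddElt Γ s y →
      bkt Γ s hs x (bkt Γ s hs y z)
        = bkt Γ s hs (bkt Γ s hs x y) z - bkt Γ s hs y (bkt Γ s hs x z)) :=
  SV_is_Lie_superalgebra_general Γ s hs

end SVSuper
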